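/- Suppose each player's constraint data in G^MBQP satisfies the Key Property (KP). If ((x_i*, X_i*))_{i∈I} is a pure-strategy Nash equilibrium of the completely positive game G^CPP, each block Q^{(i)}_{ii} is positive semidefinite, and x*_{ik} ∈ {0,1} for every k ∈ B_i and every i ∈ I, then x* = (x_i*)_{i∈I} is a pure-strategy Nash equilibrium of G^MBQP. -/

import Mathlib

open Matrix BigOperators Finset

/-- The completely positive cone: `M = A * Aᵀ` for some entrywise nonnegative matrix `A`. -/
def IsCP {ι : Type*} [Fintype ι] (M : Matrix ι ι ℝ) : Prop :=
  ∃ (r : ℕ) (A : Matrix ι (Fin r) ℝ), (∀ i j, 0 ≤ A i j) ∧ M = A * Aᵀ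

variable {I : Type*} [Fintype I] [DecidableEq I] {n : I → ℕ} {m : I → ℕ}

/-- Concatenation of a strategy profile into one long vector. -/
def conc (s : (i : I) → Fin (n i) → ℝ) : ((i : I) × Fin (n i)) → ℝ := fun p => s p.1 p.2

/-- Feasibility for player `i`'s problem `P_i^MBQP` (the constraints do not involve
the other players). -/
def MBQPFeas (a : (i : I) → Fin (m i) → Fin (n i) → ℝ) (b : (i : I) → Fin (m i) → ℝ)
    (B : (i : I) → Set (Fin (n i))) (i : I) (y : Fin (n i) → ℝ) : Prop :=
  (∀ j, a i j ⬝ᵥ y = b i j) ∧ (∀ k ∈ B i, y k = 0 ∨ y k = 1) ∧ (∀ k, 0 ≤ y k)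

/-- Player `i`'s payoff `f_i(x) = xᵀQ^{(i)}x + 2c^{(i)ᵀ}x` on the full profile. -/
def payoff (Q : (i : I) → Matrix ((i : I) × Fin (n i)) ((i : I) × Fin (n i)) ℝ)
    (c : (i : I) → ((i : I) × Fin (n i)) → ℝ) (i : I)
    (s : (i : I) → Fin (n i) → ℝ) : ℝ :=
  conc s ⬝ᵥ (Q i *ᵥ conc s) + 2 * (c i ⬝ᵥ conc s)

/-- Pure-strategy Nash equilibrium of the mixed-binary quadratic game `G^MBQP`. -/
def MBQP_PNE (a : (i : I) → Fin (m i) → Fin (n i) → ℝ) (b : (i : I) → Fin (m i) → ℝ)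
    (B : (i : I) → Set (Fin (n i)))
    (Q : (i : I) → Matrix ((i : I) × Fin (n i)) ((i : I) × Fin (n i)) ℝ)
    (c : (i : I) → ((i : I) × Fin (n i)) → ℝ)
    (s : (i : I) → Fin (n i) → ℝ) : Prop :=
  ∀ i : I, MBQPFeas a b B i (s i) ∧
    ∀ y : Fin (n i) → ℝ, MBQPFeas a b B i y →
      payoff Q c i s ≤ payoff Q c i (Function.update s i y)

/-- Feasibility for player `i`'s problem `P_i^CPP` in the completely positive game. -/
def CPPFeas (a : (i : I) → Fin (m i) → Fin (n i) → ℝ) (b : (i : I) → Fin (m i) → ℝ)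
    (B : (i : I) → Set (Fin (n i))) (α : (i : I) → Fin (n i) → ℝ) (i : I)
    (y : Fin (n i) → ℝ) (Y : Matrix (Fin (n i)) (Fin (n i)) ℝ) : Prop :=
  (∀ j, a i j ⬝ᵥ y = b i j) ∧
  (∀ j, a i j ⬝ᵥ (Y *ᵥ a i j) = (b i j) ^ 2) ∧
  (∀ k ∈ B i, y k = Y k k) ∧
  (∀ l, y l = Matrix.trace (((1 / 2 : ℝ) •
    (Matrix.vecMulVec (α i) (Pi.single l 1) + Matrix.vecMulVec (Pi.single l 1) (α i))) * Y)) ∧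
  IsCP Y

/-- Player `i`'s payoff `F_i(x_i, X_i, x_{-i})` in the completely positive game:
`Tr(Q^{(i)}_{ii}X_i) + 2x_{-i}ᵀQ^{(i)}_{-i,i}x_i + x_{-i}ᵀQ^{(i)}_{-i,-i}x_{-i} + 2c^{(i)ᵀ}x`. -/
def Fpay (Q : (i : I) → Matrix ((i : I) × Fin (n i)) ((i : I) × Fin (n i)) ℝ)
    (c : (i : I) → ((i : I) × Fin (n i)) → ℝ) (i : I)
    (s : (i : I) → Fin (n i) → ℝ) (Y : Matrix (Fin (n i)) (Fin (n i)) ℝ) : ℝ :=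
  Matrix.trace ((Matrix.of fun k l => Q i ⟨i, k⟩ ⟨i, l⟩) * Y)
  + 2 * (∑ p : (i : I) × Fin (n i), ∑ k : Fin (n i),
      if p.1 ≠ i then Q i p ⟨i, k⟩ * conc s p * s i k else 0)
  + (∑ p : (i : I) × Fin (n i), ∑ q : (i : I) × Fin (n i),
      if p.1 ≠ i ∧ q.1 ≠ i then Q i p q * conc s p * conc s q else 0)
  + 2 * (c i ⬝ᵥ conc s)

/-- Pure-strategy Nash equilibrium of the completely positive game `G^CPP`. -/
def CPP_PNE (a : (i : I) → Fin (m i) → Fin (n i) → ℝ) (b : (i : I) → Fin (m i) → ℝ)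
    (B : (i : I) → Set (Fin (n i))) (α : (i : I) → Fin (n i) → ℝ)
    (Q : (i : I) → Matrix ((i : I) × Fin (n i)) ((i : I) × Fin (n i)) ℝ)
    (c : (i : I) → ((i : I) × Fin (n i)) → ℝ)
    (s : (i : I) → Fin (n i) → ℝ)
    (XX : (i : I) → Matrix (Fin (n i)) (Fin (n i)) ℝ) : Prop :=
  ∀ i : I, CPPFeas a b B α i (s i) (XX i) ∧
    ∀ (y : Fin (n i) → ℝ) (Y : Matrix (Fin (n i)) (Fin (n i)) ℝ),
      CPPFeas a b B α i y Y →
        Fpay Q c i s (XX i) ≤ Fpay Q c i (Function.update s i y) Y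

/-- The Key Property (KP) for player `i`, with witness `α i = Σ_j y_j a_j^{(i)}`. -/
def KeyProperty (a : (i : I) → Fin (m i) → Fin (n i) → ℝ) (b : (i : I) → Fin (m i) → ℝ)
    (α : (i : I) → Fin (n i) → ℝ) : Prop :=
  ∀ i : I, ∃ y : Fin (m i) → ℝ,
    (α i = ∑ j, y j • a i j) ∧ (∀ k, 0 ≤ α i k) ∧ (∑ j, y j * b i j) = 1

/-! Under the Key Property every `y` with `a_j ⬝ y = b_j` satisfies `α ⬝ y = 1`. Hence for an
MBQP-feasible `y` the pair `(y, y yᵀ)` is CPP-feasible, and there `F_i` coincides with `f_i`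
(for symmetric `Q^{(i)}`, `F_i(x_i, X_i, x_{-i})` is `f_i` with `x_iᵀ Q_ii x_i` replaced by
`Tr(Q_ii X_i)`). Conversely, the linearised `α`-constraint with `X*_i` symmetric says
`x*_i = X*_i α`, so `x*_i ≥ 0` and `αᵀ X*_i α = 1`; Cauchy–Schwarz for the form of `X*_i` then
gives `x*_i x*_iᵀ ≤ X*_i` in the Loewner order, and `Q_ii ⪰ 0` yields
`f_i(x*) ≤ F_i(x*_i, X*_i, x*_{-i}) ≤ F_i(y, y yᵀ, x*_{-i}) = f_i(y, x*_{-i})`. -/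

namespace Matrix

variable {ι : Type*} [Fintype ι]

theorem IsSymm.dotProduct_mulVec_comm {Y : Matrix ι ι ℝ} (hY : Y.IsSymm) (v w : ι → ℝ) :
    v ⬝ᵥ Y *ᵥ w = w ⬝ᵥ Y *ᵥ v := by
  rw [dotProduct_mulVec, ← mulVec_transpose, hY.eq, dotProduct_comm]

theorem trace_mul_le_trace_mul {Q Y Z : Matrix ι ι ℝ} (hQ : Q.PosSemidef)
    (hYZ : ∀ v, v ⬝ᵥ Y *ᵥ v ≤ v ⬝ᵥ Z *ᵥ v) : trace (Q * Y) ≤ trace (Q * Z) := by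
  obtain ⟨r, u, rfl⟩ := posSemidef_iff_eq_sum_vecMulVec.mp hQ
  simp only [star_trivial, sum_mul, trace_sum, vecMulVec_mul, trace_vecMulVec]
  refine sum_le_sum fun j _ => ?_
  rw [dotProduct_comm _ (_ ᵥ* Y), dotProduct_comm _ (_ ᵥ* Z), ← dotProduct_mulVec,
    ← dotProduct_mulVec]
  exact hYZ (u j)

variable [DecidableEq ι]

theorem PosSemidef.dotProduct_mulVec_sq_le {Y : Matrix ι ι ℝ} (hY : Y.PosSemidef)
    (v w : ι → ℝ) : (v ⬝ᵥ Y *ᵥ w) ^ 2 ≤ (v ⬝ᵥ Y *ᵥ v) * (w ⬝ᵥ Y *ᵥ w) := by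
  have h := LinearMap.BilinForm.apply_mul_apply_le_of_forall_zero_le (toLinearMap₂' ℝ Y)
    (fun x => by simpa [toLinearMap₂'_apply'] using hY.dotProduct_mulVec_nonneg x) v w
  rwa [toLinearMap₂'_apply', toLinearMap₂'_apply', toLinearMap₂'_apply', toLinearMap₂'_apply',
    (isHermitian_iff_isSymm.mp hY.isHermitian).dotProduct_mulVec_comm w v, ← sq] at h

theorem PosSemidef.dotProduct_vecMulVec_mulVec_le {Y : Matrix ι ι ℝ}
    (hY : Y.PosSemidef) {α : ι → ℝ} (hα : α ⬝ᵥ Y *ᵥ α = 1) (v : ι → ℝ) :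
    v ⬝ᵥ vecMulVec (Y *ᵥ α) (Y *ᵥ α) *ᵥ v ≤ v ⬝ᵥ Y *ᵥ v := by
  rw [vecMulVec_mulVec, dotProduct_comm (Y *ᵥ α)]
  simpa [hα, ← sq] using hY.dotProduct_mulVec_sq_le v α

theorem trace_smul_add_vecMulVec_single_mul (α : ι → ℝ) (l : ι) (Y : Matrix ι ι ℝ) :
    trace (((1 / 2 : ℝ) • (vecMulVec α (Pi.single l 1) + vecMulVec (Pi.single l 1) α)) * Y)
      = ((Y *ᵥ α) l + (α ᵥ* Y) l) / 2 := by
  rw [smul_mul, add_mul, vecMulVec_mul, vecMulVec_mul, trace_smul, trace_add, trace_vecMulVec,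
    trace_vecMulVec, single_one_dotProduct, dotProduct_comm, ← dotProduct_mulVec,
    single_one_dotProduct, smul_eq_mul]
  ring

end Matrix

section IsCP

variable {ι : Type*} [Fintype ι]

theorem IsCP.posSemidef {Y : Matrix ι ι ℝ} (hY : IsCP Y) : Y.PosSemidef := by
  obtain ⟨r, A, -, rfl⟩ := hY
  exact posSemidef_self_mul_conjTranspose A

theorem IsCP.isSymm {Y : Matrix ι ι ℝ} (hY : IsCP Y) : Y.IsSymm :=
  isHermitian_iff_isSymm.mp hY.posSemidef.isHermitian

theorem IsCP.nonneg {Y : Matrix ι ι ℝ} (hY : IsCP Y) (k l : ι) : 0 ≤ Y k l := by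
  obtain ⟨r, A, hA, rfl⟩ := hY
  rw [mul_apply]
  exact sum_nonneg fun j _ => mul_nonneg (hA k j) (hA l j)

theorem isCP_vecMulVec_self {y : ι → ℝ} (hy : 0 ≤ y) : IsCP (vecMulVec y y) :=
  ⟨1, replicateCol (Fin 1) y, fun k _ => hy k, by ext; simp [vecMulVec_apply, mul_apply]⟩

end IsCP

section Sigma

variable {ι : Type*} [Fintype ι] [DecidableEq ι] {κ : ι → Type*} [∀ i, Fintype (κ i)]

theorem Fintype.sum_sigma_eq_sum_fiber_add {M : Type*} [AddCommMonoid M] (i : ι)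
    (f : (Σ j, κ j) → M) : ∑ p, f p = ∑ k, f ⟨i, k⟩ + ∑ p, if p.1 ≠ i then f p else 0 := by
  rw [← sum_filter_add_sum_filter_not univ (fun p => p.1 = i), sum_filter, sum_filter,
    Fintype.sum_sigma, Fintype.sum_eq_single i fun j hj => by simp [hj]]
  simp only [if_true, ne_eq]

theorem Matrix.IsSymm.dotProduct_mulVec_self_sigma {Q : Matrix (Σ j, κ j) (Σ j, κ j) ℝ}
    (hQ : Q.IsSymm) (i : ι) (x : (Σ j, κ j) → ℝ) :
    x ⬝ᵥ Q *ᵥ x = (x ∘ Sigma.mk i) ⬝ᵥ Q.submatrix (Sigma.mk i) (Sigma.mk i) *ᵥ (x ∘ Sigma.mk i)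
      + 2 * (∑ p, ∑ k, if p.1 ≠ i then Q p ⟨i, k⟩ * x p * x ⟨i, k⟩ else 0)
      + ∑ p, ∑ q, if p.1 ≠ i ∧ q.1 ≠ i then Q p q * x p * x q else 0 := by
  set F : (Σ j, κ j) → (Σ j, κ j) → ℝ := fun p q => Q p q * x p * x q with hF
  have hlhs : x ⬝ᵥ Q *ᵥ x = ∑ p, ∑ q, F p q := by
    simp only [dotProduct, mulVec, mul_sum, hF]
    exact sum_congr rfl fun p _ => sum_congr rfl fun q _ => by ring
  have hdiag : (x ∘ Sigma.mk i) ⬝ᵥ Q.submatrix (Sigma.mk i) (Sigma.mk i) *ᵥ (x ∘ Sigma.mk i)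
      = ∑ k, ∑ l, F ⟨i, k⟩ ⟨i, l⟩ := by
    simp only [dotProduct, mulVec, mul_sum, hF, submatrix_apply, Function.comp_apply]
    exact sum_congr rfl fun p _ => sum_congr rfl fun q _ => by ring
  have hcross : ∑ k, ∑ q, (if q.1 ≠ i then F ⟨i, k⟩ q else 0)
      = ∑ p, ∑ k, if p.1 ≠ i then F p ⟨i, k⟩ else 0 := by
    rw [sum_comm]
    refine sum_congr rfl fun q _ => sum_congr rfl fun k _ => ?_
    simp only [hF, hQ.apply q ⟨i, k⟩]
    ring_nf
  rw [hlhs, hdiag]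
  simp only [Fintype.sum_sigma_eq_sum_fiber_add i (F _)]
  rw [sum_add_distrib, Fintype.sum_sigma_eq_sum_fiber_add i (fun p => ∑ k, F p ⟨i, k⟩),
    Fintype.sum_sigma_eq_sum_fiber_add i (fun p => ∑ q, if q.1 ≠ i then F p q else 0), hcross]
  simp only [ite_and, hF, sum_ite_irrel, sum_const_zero]
  ring

end Sigma

section Game

omit [Fintype I] [DecidableEq I]

variable {a : (i : I) → Fin (m i) → Fin (n i) → ℝ} {b : (i : I) → Fin (m i) → ℝ}
  {B : (i : I) → Set (Fin (n i))} {α : (i : I) → Fin (n i) → ℝ} {i : I}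
  {y : Fin (n i) → ℝ} {Y : Matrix (Fin (n i)) (Fin (n i)) ℝ}

theorem KeyProperty.dotProduct_eq_one (hKP : KeyProperty a b α)
    (hy : ∀ j, a i j ⬝ᵥ y = b i j) : α i ⬝ᵥ y = 1 := by
  obtain ⟨w, hα, -, hw⟩ := hKP i
  rw [hα, sum_dotProduct, ← hw]
  simp [smul_dotProduct, hy]

theorem CPPFeas.isCP (h : CPPFeas a b B α i y Y) : IsCP Y := h.2.2.2.2

theorem CPPFeas.eq_mulVec (h : CPPFeas a b B α i y Y) : y = Y *ᵥ α i := by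
  funext l
  rw [h.2.2.2.1 l, trace_smul_add_vecMulVec_single_mul, ← mulVec_transpose, h.isCP.isSymm.eq]
  ring

theorem CPPFeas.mbqpFeas (hKP : KeyProperty a b α) (h : CPPFeas a b B α i y Y)
    (hbin : ∀ k ∈ B i, y k = 0 ∨ y k = 1) : MBQPFeas a b B i y := by
  obtain ⟨w, -, hα, -⟩ := hKP i
  refine ⟨h.1, hbin, fun k => ?_⟩
  rw [h.eq_mulVec, mulVec, dotProduct]
  exact sum_nonneg fun l _ => mul_nonneg (h.isCP.nonneg k l) (hα l)

theorem MBQPFeas.cppFeas_vecMulVec (hKP : KeyProperty a b α) (hy : MBQPFeas a b B i y) :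
    CPPFeas a b B α i y (vecMulVec y y) := by
  obtain ⟨hlin, hbin, hnn⟩ := hy
  have hαy := hKP.dotProduct_eq_one hlin
  refine ⟨hlin, fun j => ?_, fun k hk => ?_, fun l => ?_, isCP_vecMulVec_self hnn⟩
  · simp [vecMulVec_mulVec, dotProduct_comm y, hlin j, sq]
  · rcases hbin k hk with h | h <;> simp [vecMulVec_apply, h]
  · rw [trace_smul_add_vecMulVec_single_mul, vecMulVec_mulVec, vecMul_vecMulVec,
      dotProduct_comm y, hαy]
    simp

end Game

section Payoff

variable {Q : (i : I) → Matrix ((i : I) × Fin (n i)) ((i : I) × Fin (n i)) ℝ}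
  {c : (i : I) → ((i : I) × Fin (n i)) → ℝ} {i : I}

theorem Fpay_le_Fpay {t : (i : I) → Fin (n i) → ℝ} {Y Y' : Matrix (Fin (n i)) (Fin (n i)) ℝ}
    (h : trace ((of fun k l => Q i ⟨i, k⟩ ⟨i, l⟩) * Y) ≤
      trace ((of fun k l => Q i ⟨i, k⟩ ⟨i, l⟩) * Y')) :
    Fpay Q c i t Y ≤ Fpay Q c i t Y' := by
  unfold Fpay
  linarith

theorem payoff_eq_Fpay_vecMulVec (hQ : (Q i).IsSymm) (t : (i : I) → Fin (n i) → ℝ) :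
    payoff Q c i t = Fpay Q c i t (vecMulVec (t i) (t i)) := by
  rw [payoff, Fpay, hQ.dotProduct_mulVec_self_sigma i, mul_vecMulVec, trace_vecMulVec,
    dotProduct_comm]
  rfl

end Payoff

theorem cpp_pne_projects_to_mbqp_pne_general
    (a : (i : I) → Fin (m i) → Fin (n i) → ℝ) (b : (i : I) → Fin (m i) → ℝ)
    (B : (i : I) → Set (Fin (n i))) (α : (i : I) → Fin (n i) → ℝ)
    (Q : (i : I) → Matrix ((i : I) × Fin (n i)) ((i : I) × Fin (n i)) ℝ)
    (c : (i : I) → ((i : I) × Fin (n i)) → ℝ)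
    (hQsym : ∀ i, (Q i).IsSymm)
    (hKP : KeyProperty a b α)
    (s : (i : I) → Fin (n i) → ℝ)
    (XX : (i : I) → Matrix (Fin (n i)) (Fin (n i)) ℝ)
    (hpne : CPP_PNE a b B α Q c s XX)
    (hpsd : ∀ i, (Matrix.of fun k l => Q i ⟨i, k⟩ ⟨i, l⟩ :
      Matrix (Fin (n i)) (Fin (n i)) ℝ).PosSemidef)
    (hbin : ∀ i, ∀ k ∈ B i, s i k = 0 ∨ s i k = 1) :
    MBQP_PNE a b B Q c s := by
  intro i
  obtain ⟨hfeas, hopt⟩ := hpne i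
  have hα : α i ⬝ᵥ XX i *ᵥ α i = 1 := hfeas.eq_mulVec ▸ hKP.dotProduct_eq_one hfeas.1
  refine ⟨hfeas.mbqpFeas hKP (hbin i), fun y hy => ?_⟩
  calc payoff Q c i s = Fpay Q c i s (vecMulVec (s i) (s i)) :=
        payoff_eq_Fpay_vecMulVec (hQsym i) s
    _ ≤ Fpay Q c i s (XX i) := by
      refine Fpay_le_Fpay (trace_mul_le_trace_mul (hpsd i) ?_)
      rw [hfeas.eq_mulVec]
      exact hfeas.isCP.posSemidef.dotProduct_vecMulVec_mulVec_le hα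
    _ ≤ Fpay Q c i (Function.update s i y) (vecMulVec y y) := hopt y _ (hy.cppFeas_vecMulVec hKP)
    _ = payoff Q c i (Function.update s i y) := by
      rw [payoff_eq_Fpay_vecMulVec (hQsym i), Function.update_self]

/-- under the Key Property, if `((x_i*, X_i*))_i` is a pure-strategy Nash
equilibrium of `G^CPP`, each `Q^{(i)}_{ii}` is positive semidefinite, and `x*_{ik}` is
binary for every `k ∈ B_i`, then `x*` is a pure-strategy Nash equilibrium of `G^MBQP`. -/
theorem cpp_pne_projects_to_mbqp_pne
    (a : (i : I) → Fin (m i) → Fin (n i) → ℝ) (b : (i : I) → Fin (m i) → ℝ)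
    (B : (i : I) → Set (Fin (n i))) (α : (i : I) → Fin (n i) → ℝ)
    (Q : (i : I) → Matrix ((i : I) × Fin (n i)) ((i : I) × Fin (n i)) ℝ)
    (c : (i : I) → ((i : I) × Fin (n i)) → ℝ)
    (hQsym : ∀ i, (Q i).IsSymm)
    (hbounded : ∀ i, Bornology.IsBounded {y : Fin (n i) → ℝ | MBQPFeas a b B i y})
    (hKP : KeyProperty a b α)
    (s : (i : I) → Fin (n i) → ℝ)
    (XX : (i : I) → Matrix (Fin (n i)) (Fin (n i)) ℝ)
    (hpne : CPP_PNE a b B α Q c s XX)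
    (hpsd : ∀ i, (Matrix.of fun k l => Q i ⟨i, k⟩ ⟨i, l⟩ :
      Matrix (Fin (n i)) (Fin (n i)) ℝ).PosSemidef)
    (hbin : ∀ i, ∀ k ∈ B i, s i k = 0 ∨ s i k = 1) :
    MBQP_PNE a b B Q c s :=
  cpp_pne_projects_to_mbqp_pne_general a b B α Q c hQsym hKP s XX hpne hpsd hbin
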